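/- With notation as above (γ(k)[i][j] = ct(P^k x^{i−pj}) mod p on index set T = {−m,…,m}, m ≥ max(deg P − 1, deg Q)), define the row vector vec(Q)[i] = (coefficient of x^i in Q) mod p and the column vector V(0) = e_0 (the indicator of index 0). Then for all n ∈ ℕ, writing n in base p as digits n_p[0] (least significant) through n_p[ℓ−1], we have vec(Q) · γ(n_p[0]) · γ(n_p[1]) ⋯ γ(n_p[ℓ−1]) · V(0) = ct(P^n Q) mod p. That is, (vec(Q), γ, V(0)) is a p-linear representation of the sequence ct(P^n Q) mod p. -/

import Mathlib

open scoped Classical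

/-- `Λ_p`: delete terms whose exponent is not divisible by `p` and substitute `x^p ↦ x`. -/
noncomputable def lam {R : Type*} [Semiring R] (p : ℕ) (hp : p ≠ 0) (Q : LaurentPolynomial R) :
    LaurentPolynomial R :=
  AddMonoidAlgebra.ofCoeff (Finsupp.comapDomain (fun i : ℤ => (p : ℤ) * i) Q.coeff
    ((mul_right_injective₀ (Int.natCast_ne_zero.mpr hp)).injOn))

/-- `substPow p Q = Q(x^p)`. -/
noncomputable def substPow {R : Type*} [Semiring R] (p : ℕ) (Q : LaurentPolynomial R) :
    LaurentPolynomial R :=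
  AddMonoidAlgebra.ofCoeff (Finsupp.mapDomain (fun i : ℤ => (p : ℤ) * i) Q.coeff)

/-- The largest absolute value of an exponent with nonzero coefficient (`0` for `Q = 0`). -/
noncomputable def ldeg {R : Type*} [Semiring R] (Q : LaurentPolynomial R) : ℕ :=
  Q.coeff.support.sup fun i => i.natAbs

/-- The exponent indexed by `i ∈ Fin (2m+1)`, running over `T = {−m, …, m}`. -/
def idx (m : ℕ) (i : Fin (2 * m + 1)) : ℤ := (i : ℤ) - m

/-- `V(n)[i] = ct(P^n · x^i) mod p`, the low-degree coefficients of `P^n`. -/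
noncomputable def Vvec (p : ℕ) (P : LaurentPolynomial ℤ) (m : ℕ) (n : ℕ) :
    Fin (2 * m + 1) → ZMod p :=
  fun i => (((P ^ n).coeff (-(idx m i)) : ℤ) : ZMod p)

/-- `γ(k)[i][j] = ct(P^k · x^{i − pj}) mod p`. -/
noncomputable def gam (p : ℕ) (P : LaurentPolynomial ℤ) (m : ℕ) (k : ℕ) :
    Matrix (Fin (2 * m + 1)) (Fin (2 * m + 1)) (ZMod p) :=
  fun i j => (((P ^ k).coeff ((p : ℤ) * idx m j - idx m i) : ℤ) : ZMod p)


section lemmas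

variable {R : Type*} [CommSemiring R]

lemma lam_apply (p : ℕ) (hp : p ≠ 0) (Q : LaurentPolynomial R) (t : ℤ) :
    (lam p hp Q).coeff t = Q.coeff ((p : ℤ) * t) :=
  Finsupp.comapDomain_apply _ _ _ _

lemma mul_apply_right' (f g : LaurentPolynomial R) (x : ℤ) :
    (f * g).coeff x = g.coeff.sum fun a b => f.coeff (x - a) * b := by
  rw [AddMonoidAlgebra.coeff_mul_apply_right]
  simp only [sub_eq_add_neg]

lemma mul_apply_left' (f g : LaurentPolynomial R) (x : ℤ) :
    (f * g).coeff x = f.coeff.sum fun a b => b * g.coeff (-a + x) :=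
  AddMonoidAlgebra.coeff_mul_apply_left f g x

lemma ct_substPow (p : ℕ) (hp : p ≠ 0) (A S : LaurentPolynomial R) :
    (A * lam p hp S).coeff 0 = (substPow p A * S).coeff 0 := by
  rw [mul_apply_left', mul_apply_left', substPow, AddMonoidAlgebra.coeff_ofCoeff,
    Finsupp.sum_mapDomain_index (fun b => by simp) (fun b m₁ m₂ => by rw [add_mul])]
  refine Finsupp.sum_congr fun a _ => ?_
  rw [lam_apply]
  ring_nf

end lemmas

section frob

lemma charP_laurent (p : ℕ) [CharP (ZMod p) p] :
    CharP (LaurentPolynomial (ZMod p)) p :=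
  charP_of_injective_ringHom
    (f := AddMonoidAlgebra.singleZeroRingHom (R := ZMod p) (M := ℤ))
    (fun _ _ h => AddMonoidAlgebra.single_right_inj.mp h) p

lemma frob (p : ℕ) [Fact p.Prime] (A : LaurentPolynomial (ZMod p)) :
    A ^ p = substPow p A := by
  haveI := charP_laurent p
  induction A using AddMonoidAlgebra.induction with
  | zero => simp [substPow, zero_pow (Fact.out : p.Prime).ne_zero]
  | single_add a b f ha hb ih =>
    rw [add_pow_char, ih]
    change _ + AddMonoidAlgebra.mapDomain (fun i : ℤ => (p : ℤ) * i) f =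
      AddMonoidAlgebra.mapDomain (fun i : ℤ => (p : ℤ) * i) (AddMonoidAlgebra.single a b + f)
    rw [AddMonoidAlgebra.mapDomain_add, AddMonoidAlgebra.mapDomain_single]
    congr 1
    rw [AddMonoidAlgebra.single_pow, ZMod.pow_card, nsmul_eq_mul]

end frob

section phi

noncomputable def phi (p : ℕ) : LaurentPolynomial ℤ →+* LaurentPolynomial (ZMod p) :=
  AddMonoidAlgebra.liftNCRingHom
    ((AddMonoidAlgebra.singleZeroRingHom).comp (Int.castRingHom (ZMod p)))
    (AddMonoidAlgebra.of (ZMod p) ℤ)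
    (fun _ _ => Commute.all _ _)

lemma phi_single (p : ℕ) (a : ℤ) (b : ℤ) :
    phi p (AddMonoidAlgebra.single a b) = AddMonoidAlgebra.single a ((b : ZMod p)) := by
  show AddMonoidAlgebra.liftNC _ _ (AddMonoidAlgebra.single a b) = _
  rw [AddMonoidAlgebra.liftNC_single]
  show AddMonoidAlgebra.single (0 : ℤ) ((b : ZMod p)) * AddMonoidAlgebra.single a 1 = _
  rw [AddMonoidAlgebra.single_mul_single, zero_add, mul_one]

lemma phi_apply (p : ℕ) (F : LaurentPolynomial ℤ) (t : ℤ) :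
    (phi p F).coeff t = ((F.coeff t : ℤ) : ZMod p) := by
  induction F using AddMonoidAlgebra.induction with
  | zero => simp
  | single_add a b f ha hb ih =>
    rw [map_add, AddMonoidAlgebra.coeff_add, AddMonoidAlgebra.coeff_add, Finsupp.add_apply,
      Finsupp.add_apply, ih, phi_single]
    simp only [AddMonoidAlgebra.coeff_single, Finsupp.single_apply]
    split_ifs <;> push_cast <;> ring

lemma phi_lam (p : ℕ) (hp : p ≠ 0) (F : LaurentPolynomial ℤ) :
    phi p (lam p hp F) = lam p hp (phi p F) := by
  ext t
  rw [phi_apply, lam_apply, lam_apply, phi_apply]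

end phi



section main

lemma support_subset_Icc {Q : LaurentPolynomial ℤ} {m : ℕ} (h : ldeg Q ≤ m) :
    Q.coeff.support ⊆ Finset.Icc (-(m : ℤ)) m := by
  intro a ha
  rw [ldeg] at h
  have h1 : a.natAbs ≤ m := le_trans (Finset.le_sup (f := fun i : ℤ => i.natAbs) ha) h
  simp only [Finset.mem_Icc]
  omega

lemma sum_idx {M : Type*} [AddCommMonoid M] (m : ℕ) (f : ℤ → M) :
    ∑ i : Fin (2 * m + 1), f (idx m i) = ∑ a ∈ Finset.Icc (-(m : ℤ)) m, f a := by
  refine Finset.sum_nbij' (fun i => idx m i)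
      (fun a => ⟨min (a + (m : ℤ)).toNat (2 * m), by omega⟩) ?_ ?_ ?_ ?_ ?_
  · intro i _
    have := i.isLt
    simp only [Finset.mem_Icc, idx]
    omega
  · intro a _; exact Finset.mem_univ _
  · intro i _
    apply Fin.ext
    have := i.isLt
    simp only [idx]
    omega
  · intro a ha
    simp only [Finset.mem_Icc] at ha
    simp only [idx]
    omega
  · intro i _; rfl

lemma conv_fin {m : ℕ} {Q : LaurentPolynomial ℤ} (hQ : ldeg Q ≤ m)
    (F : LaurentPolynomial ℤ) (t : ℤ) :
    ∑ i : Fin (2 * m + 1), Q.coeff (idx m i) * F.coeff (t - idx m i) = (F * Q).coeff t := by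
  have h1 : (F * Q).coeff t = ∑ a ∈ Finset.Icc (-(m : ℤ)) m, F.coeff (t - a) * Q.coeff a := by
    rw [mul_apply_right']
    exact Finset.sum_subset (support_subset_Icc hQ) fun x _ hnx => by
      simp [Finsupp.notMem_support_iff.mp hnx]
  rw [h1, sum_idx m (fun a => Q.coeff a * F.coeff (t - a))]
  exact Finset.sum_congr rfl fun a _ => mul_comm _ _

lemma vec_step (p : ℕ) (hp : p ≠ 0) (P Q : LaurentPolynomial ℤ) (m k : ℕ) (hQ : ldeg Q ≤ m) :
    Matrix.vecMul (fun i => ((Q.coeff (idx m i) : ℤ) : ZMod p)) (gam p P m k)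
      = fun j => (((lam p hp (P ^ k * Q)).coeff (idx m j) : ℤ) : ZMod p) := by
  funext j
  simp only [Matrix.vecMul, dotProduct, gam, lam_apply]
  rw [← conv_fin hQ (P ^ k) ((p : ℤ) * idx m j)]
  push_cast
  rfl

lemma ldeg_mul_le (F G : LaurentPolynomial ℤ) : ldeg (F * G) ≤ ldeg F + ldeg G := by
  rw [ldeg]
  apply Finset.sup_le
  intro t ht
  have h := AddMonoidAlgebra.support_coeff_mul_subset F G ht
  rw [Finset.mem_add] at h
  obtain ⟨a, ha, b, hb, rfl⟩ := h
  have h1 : a.natAbs ≤ ldeg F := Finset.le_sup ha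
  have h2 : b.natAbs ≤ ldeg G := Finset.le_sup hb
  omega

lemma ldeg_one : ldeg (1 : LaurentPolynomial ℤ) = 0 := by
  rw [ldeg]
  have : (1 : LaurentPolynomial ℤ) = AddMonoidAlgebra.single 0 1 := rfl
  rw [this, AddMonoidAlgebra.coeff_single, Finsupp.support_single_ne_zero _ one_ne_zero]
  simp

lemma ldeg_pow_le (F : LaurentPolynomial ℤ) (k : ℕ) : ldeg (F ^ k) ≤ k * ldeg F := by
  induction k with
  | zero => simp [pow_zero, ldeg_one]
  | succ k ih =>
    rw [pow_succ]
    calc ldeg (F ^ k * F) ≤ ldeg (F ^ k) + ldeg F := ldeg_mul_le _ _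
      _ ≤ k * ldeg F + ldeg F := by omega
      _ = (k + 1) * ldeg F := by ring

lemma ldeg_lam_le {p : ℕ} (hp : p ≠ 0) (S : LaurentPolynomial ℤ) {m : ℕ}
    (h : ldeg S ≤ p * (m + 1) - 1) : ldeg (lam p hp S) ≤ m := by
  rw [ldeg]
  apply Finset.sup_le
  intro t ht
  have h0 : S.coeff ((p : ℤ) * t) ≠ 0 := by rwa [Finsupp.mem_support_iff, lam_apply] at ht
  have h2 : ((p : ℤ) * t).natAbs ≤ ldeg S := Finset.le_sup (Finsupp.mem_support_iff.mpr h0)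
  rw [Int.natAbs_mul, Int.natAbs_natCast] at h2
  have h4 : 0 < p * (m + 1) := Nat.mul_pos (Nat.pos_of_ne_zero hp) (Nat.succ_pos m)
  have h5 : p * t.natAbs < p * (m + 1) := by omega
  exact Nat.lt_succ_iff.mp (Nat.lt_of_mul_lt_mul_left h5)

lemma star (p : ℕ) (hp : p.Prime) (P S : LaurentPolynomial ℤ) (n' : ℕ) :
    (((P ^ n' * lam p hp.ne_zero S).coeff 0 : ℤ) : ZMod p)
      = (((P ^ (p * n') * S).coeff 0 : ℤ) : ZMod p) := by
  haveI : Fact p.Prime := ⟨hp⟩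
  rw [← phi_apply, ← phi_apply, map_mul, map_mul, phi_lam, map_pow, map_pow,
    ct_substPow p hp.ne_zero, ← frob, ← pow_mul, Nat.mul_comm]

lemma key (p : ℕ) (hp : p.Prime) (P : LaurentPolynomial ℤ) (m : ℕ)
    (hmP : ldeg P ≤ m + 1) :
    ∀ n : ℕ, ∀ Q : LaurentPolynomial ℤ, ldeg Q ≤ m →
      dotProduct
        (Matrix.vecMul (fun i => ((Q.coeff (idx m i) : ℤ) : ZMod p))
          (((Nat.digits p n).map (gam p P m)).prod))
        (fun i => if idx m i = 0 then 1 else 0) =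
      (((P ^ n * Q).coeff 0 : ℤ) : ZMod p) := by
  intro n
  induction n using Nat.strong_induction_on with
  | _ n ih =>
    intro Q hQ
    rcases Nat.eq_zero_or_pos n with h0 | hpos
    · subst h0
      rw [Nat.digits_zero, List.map_nil, List.prod_nil, Matrix.vecMul_one, pow_zero, one_mul]
      have him : ∀ i : Fin (2 * m + 1), (idx m i = 0) ↔ i = (⟨m, by omega⟩ : Fin (2 * m + 1)) := by
        intro i
        rw [Fin.ext_iff]
        show ((i : ℕ) : ℤ) - (m : ℤ) = 0 ↔ (i : ℕ) = m
        omega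
      simp only [dotProduct, him, mul_ite, mul_one, mul_zero]
      rw [Finset.sum_ite_eq' Finset.univ]
      simp [idx]
    · rw [Nat.digits_def' hp.one_lt hpos, List.map_cons, List.prod_cons,
        ← Matrix.vecMul_vecMul, vec_step p hp.ne_zero P Q m (n % p) hQ]
      have hQ' : ldeg (lam p hp.ne_zero (P ^ (n % p) * Q)) ≤ m := by
        apply ldeg_lam_le
        have h1 : ldeg (P ^ (n % p) * Q) ≤ (n % p) * (m + 1) + m := by
          calc ldeg (P ^ (n % p) * Q) ≤ ldeg (P ^ (n % p)) + ldeg Q := ldeg_mul_le _ _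
            _ ≤ (n % p) * ldeg P + m := by
                have := ldeg_pow_le P (n % p); omega
            _ ≤ (n % p) * (m + 1) + m := by
                have := Nat.mul_le_mul_left (n % p) hmP; omega
        have hk : n % p ≤ p - 1 := by
          have := Nat.mod_lt n hp.pos; omega
        have h2 : (n % p) * (m + 1) ≤ (p - 1) * (m + 1) := Nat.mul_le_mul_right _ hk
        obtain ⟨pp, rfl⟩ : ∃ pp, p = pp + 1 := ⟨p - 1, by have := hp.pos; omega⟩
        have h3 : (pp + 1) * (m + 1) = pp * (m + 1) + (m + 1) := by ring
        simp only [Nat.add_sub_cancel] at h2 ⊢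
        omega
      rw [ih (n / p) (Nat.div_lt_self hpos hp.one_lt) _ hQ',
        star p hp P (P ^ (n % p) * Q) (n / p), ← mul_assoc, ← pow_add,
        Nat.div_add_mod]

end main

/-- `(vec(Q), γ, V(0))` is a `p`-linear representation of
`ct(P^n Q) mod p`: multiplying `vec(Q)` by the matrices of the base-`p` digits of `n`
(least significant first) and then by the indicator vector of index `0` gives `ct(P^n Q)`. -/
theorem stmt6 (p : ℕ) (hp : p.Prime) (P Q : LaurentPolynomial ℤ) (m : ℕ)
    (hmP : ldeg P ≤ m + 1) (hmQ : ldeg Q ≤ m) :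
    ∀ n : ℕ,
      dotProduct
        (Matrix.vecMul (fun i => ((Q.coeff (idx m i) : ℤ) : ZMod p))
          (((Nat.digits p n).map (gam p P m)).prod))
        (fun i => if idx m i = 0 then 1 else 0) =
      (((P ^ n * Q).coeff 0 : ℤ) : ZMod p) := by
  exact fun n => key p hp P m hmP n Q hmQ
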